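/- Let f be a bicritical rational map on the Riemann sphere such that |C_f ∪ V_f| = 4. Then there exist at most four Möbius transformations μ satisfying both μ(C_f) = C_f and μ(V_f) = V_f; any such μ which is not the identity is an involution; these transformations form a group under composition, and if all four exist, this group is isomorphic to the Klein four group V_4. -/

import Mathlib

open Polynomial OnePoint Function

noncomputable section

abbrev RSphere : Type := OnePoint ℂ

namespace RSphere

def mApply (a b c d : ℂ) : RSphere → RSphere := fun z =>
  match z with
  | ∞ => if c = 0 then ∞ else ((a / c : ℂ) : RSphere)
  | (x : ℂ) => if c * x + d = 0 then ∞ else (((a * x + b) / (c * x + d) : ℂ) : RSphere)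

@[simp] lemma mApply_infty (a b c d : ℂ) :
    mApply a b c d ∞ = if c = 0 then ∞ else ((a / c : ℂ) : RSphere) := rfl

@[simp] lemma mApply_coe (a b c d : ℂ) (x : ℂ) :
    mApply a b c d (x : RSphere) =
      if c * x + d = 0 then ∞ else (((a * x + b) / (c * x + d) : ℂ) : RSphere) := rfl

def IsMobius (g : RSphere → RSphere) : Prop :=
  ∃ a b c d : ℂ, a * d - b * c ≠ 0 ∧ g = mApply a b c d

lemma mApply_diag {t : ℂ} (ht : t ≠ 0) : mApply t 0 0 t = id := by
  funext z
  induction z using OnePoint.rec with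
  | infty => simp
  | coe x => simp [ht]

theorem mApply_comp (a b c d a' b' c' d' : ℂ) (h' : a' * d' - b' * c' ≠ 0) :
    mApply a b c d ∘ mApply a' b' c' d' =
      mApply (a * a' + b * c') (a * b' + b * d') (c * a' + d * c') (c * b' + d * d') := by
  funext z
  induction z using OnePoint.rec with
  | infty =>
    simp only [comp_apply, mApply_infty]
    rcases eq_or_ne c' 0 with hc' | hc'
    · have ha' : a' ≠ 0 := fun h => h' (by rw [hc', h]; ring)
      rw [if_pos hc', mApply_infty, hc']
      simp only [mul_zero, add_zero]
      rcases eq_or_ne c 0 with hc | hc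
      · rw [if_pos hc, hc, zero_mul, if_pos rfl]
      · rw [if_neg hc, if_neg (mul_ne_zero hc ha'), mul_div_mul_right _ _ ha']
    · rw [if_neg hc', mApply_coe]
      have hd : c * (a' / c') + d = (c * a' + d * c') / c' := by field_simp
      rcases eq_or_ne (c * a' + d * c') 0 with h2 | h2
      · rw [if_pos (by rw [hd, h2, zero_div]), if_pos h2]
      · rw [if_neg (by rw [hd]; exact div_ne_zero h2 hc'), if_neg h2]
        congr 1
        rw [div_eq_div_iff (by rw [hd]; exact div_ne_zero h2 hc') h2]
        field_simp
        try ring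
  | coe x =>
    simp only [comp_apply, mApply_coe]
    have key2 : (c * a' + d * c') * x + (c * b' + d * d') =
        c * (a' * x + b') + d * (c' * x + d') := by ring
    have key1 : (a * a' + b * c') * x + (a * b' + b * d') =
        a * (a' * x + b') + b * (c' * x + d') := by ring
    rcases eq_or_ne (c' * x + d') 0 with h0 | h0
    · have hne : a' * x + b' ≠ 0 := by
        intro h
        apply h'
        have hh : a' * (c' * x + d') - c' * (a' * x + b') = a' * d' - b' * c' := by ring
        rw [← hh, h0, h, mul_zero, mul_zero, sub_zero]
      rw [if_pos h0, mApply_infty]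
      rw [show (c * a' + d * c') * x + (c * b' + d * d') = c * (a' * x + b') by
        rw [key2, h0, mul_zero, add_zero]]
      rw [show (a * a' + b * c') * x + (a * b' + b * d') = a * (a' * x + b') by
        rw [key1, h0, mul_zero, add_zero]]
      rcases eq_or_ne c 0 with hc | hc
      · rw [if_pos hc, if_pos (by rw [hc, zero_mul])]
      · rw [if_neg hc, if_neg (mul_ne_zero hc hne), mul_div_mul_right _ _ hne]
    · rw [if_neg h0, mApply_coe]
      have hw : c * ((a' * x + b') / (c' * x + d')) + d =
          ((c * a' + d * c') * x + (c * b' + d * d')) / (c' * x + d') := by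
        rw [mul_div_assoc', div_add' _ _ _ h0]; congr 1; ring
      rcases eq_or_ne ((c * a' + d * c') * x + (c * b' + d * d')) 0 with h2 | h2
      · rw [if_pos (by rw [hw, h2, zero_div]), if_pos h2]
      · rw [if_neg (by rw [hw]; exact div_ne_zero h2 h0), if_neg h2]
        congr 1
        rw [div_eq_div_iff (by rw [hw]; exact div_ne_zero h2 h0) h2]
        linear_combination (a * d - b * c) * div_mul_cancel₀ (a' * x + b') h0

end RSphere

namespace RSphere

lemma IsMobius.id' : IsMobius (id : RSphere → RSphere) :=
  ⟨1, 0, 0, 1, by norm_num, (mApply_diag one_ne_zero).symm⟩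

lemma IsMobius.comp {g h : RSphere → RSphere} (hg : IsMobius g) (hh : IsMobius h) :
    IsMobius (g ∘ h) := by
  obtain ⟨a, b, c, d, hdet, rfl⟩ := hg
  obtain ⟨a', b', c', d', hdet', rfl⟩ := hh
  refine ⟨_, _, _, _, ?_, mApply_comp a b c d a' b' c' d' hdet'⟩
  have key : (a * a' + b * c') * (c * b' + d * d') - (a * b' + b * d') * (c * a' + d * c')
      = (a * d - b * c) * (a' * d' - b' * c') := by ring
  rw [key]
  exact mul_ne_zero hdet hdet'

lemma mApply_inv_comp {a b c d : ℂ} (h : a * d - b * c ≠ 0) :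
    mApply d (-b) (-c) a ∘ mApply a b c d = id := by
  rw [mApply_comp d (-b) (-c) a a b c d h]
  rw [show d * a + -b * c = a * d - b * c by ring, show d * b + -b * d = 0 by ring,
    show -c * a + a * c = 0 by ring, show -c * b + a * d = a * d - b * c by ring]
  exact mApply_diag h

/-- The deck group of a map `F` of the Riemann sphere: the group of all Möbius
transformations `μ` with `F ∘ μ = F`, as a subgroup of the permutations of the sphere. -/
def deckGroup (F : RSphere → RSphere) : Subgroup (Equiv.Perm RSphere) where
  carrier := {σ | IsMobius ⇑σ ∧ F ∘ ⇑σ = F}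
  one_mem' := ⟨by rw [Equiv.Perm.coe_one]; exact IsMobius.id', by rw [Equiv.Perm.coe_one, Function.comp_id]⟩
  mul_mem' := by
    intro σ τ hσ hτ
    refine ⟨?_, ?_⟩
    · rw [Equiv.Perm.coe_mul]; exact hσ.1.comp hτ.1
    · rw [Equiv.Perm.coe_mul, ← Function.comp_assoc, hσ.2, hτ.2]
  inv_mem' := by
    intro σ hσ
    obtain ⟨⟨a, b, c, d, hdet, hg⟩, hF⟩ := hσ
    have hinv : ⇑σ⁻¹ = mApply d (-b) (-c) a := by
      funext x
      have h1 : mApply d (-b) (-c) a ∘ ⇑σ = id := by rw [hg]; exact mApply_inv_comp hdet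
      have h2 := congrFun h1 (σ⁻¹ x)
      simp only [comp_apply, show σ (σ⁻¹ x) = x from σ.apply_symm_apply x, id_eq] at h2
      exact h2.symm
    constructor
    · exact ⟨d, -b, -c, a, by rw [show d * a - -b * -c = a * d - b * c by ring]; exact hdet, hinv⟩
    · funext x
      have h3 := congrFun hF (σ⁻¹ x)
      simp only [comp_apply, show σ (σ⁻¹ x) = x from σ.apply_symm_apply x] at h3
      exact h3.symm

end RSphere

/-- A rational map of the Riemann sphere, given by a pair of coprime polynomials. -/
structure RatMap where
  num : Polynomial ℂ
  den : Polynomial ℂ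
  coprime : IsCoprime num den

namespace RatMap

open RSphere

/-- The (topological) degree of a rational map. -/
def degree (f : RatMap) : ℕ := max f.num.natDegree f.den.natDegree

/-- Evaluation of a rational map at a point of the Riemann sphere. -/
def eval (f : RatMap) : RSphere → RSphere := fun z =>
  match z with
  | ∞ =>
      if f.den.degree < f.num.degree then ∞
      else if f.num.degree < f.den.degree then ((0 : ℂ) : RSphere)
      else ((f.num.leadingCoeff / f.den.leadingCoeff : ℂ) : RSphere)
  | (x : ℂ) =>
      if f.den.eval x = 0 then ∞ else ((f.num.eval x / f.den.eval x : ℂ) : RSphere)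

/-- The polynomial whose finite roots (with multiplicity) form the fiber of `f` over `w`. -/
def fiberPoly (f : RatMap) (w : RSphere) : Polynomial ℂ :=
  match w with
  | ∞ => f.den
  | (c : ℂ) => f.num - Polynomial.C c * f.den

/-- The local degree of a rational map at a point of the Riemann sphere: the multiplicity
of the point in the fiber over its image. -/
def localDegree (f : RatMap) (z : RSphere) : ℕ :=
  match z with
  | ∞ => f.degree - (f.fiberPoly (f.eval ∞)).natDegree
  | (x : ℂ) => (f.fiberPoly (f.eval (x : RSphere))).rootMultiplicity x

/-- The set of critical points of a rational map. -/
def criticalPoints (f : RatMap) : Set RSphere := {z | 2 ≤ f.localDegree z}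

/-- The set of critical values of a rational map. -/
def criticalValues (f : RatMap) : Set RSphere := f.eval '' f.criticalPoints

/-- A rational map is bicritical if it has exactly two critical points. -/
def Bicritical (f : RatMap) : Prop := f.criticalPoints.encard = 2

/-- The local degree of the iterate `f^k` at `z` (computed by the chain rule for
local degrees). -/
def localDegreeIter (f : RatMap) (k : ℕ) (z : RSphere) : ℕ :=
  ∏ j ∈ Finset.range k, f.localDegree (f.eval^[j] z)

/-- The power map `z ↦ z ^ d` on the Riemann sphere. -/
def powMap (d : ℕ) : RSphere → RSphere := fun z =>
  match z with
  | ∞ => ∞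
  | (x : ℂ) => ((x ^ d : ℂ) : RSphere)

/-- The power map `z ↦ z ^ (-d)` on the Riemann sphere. -/
def powMapNeg (d : ℕ) : RSphere → RSphere := fun z =>
  match z with
  | ∞ => ((0 : ℂ) : RSphere)
  | (x : ℂ) => if x = 0 then ∞ else (((x ^ d)⁻¹ : ℂ) : RSphere)

/-- A rational map of degree `d` is a power map if it is Möbius-conjugate to
`z ↦ z ^ d` or to `z ↦ z ^ (-d)`. -/
def IsPowerMap (f : RatMap) : Prop :=
  ∃ g h : RSphere → RSphere, IsMobius g ∧ IsMobius h ∧ g ∘ h = id ∧ h ∘ g = id ∧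
    (g ∘ f.eval ∘ h = powMap f.degree ∨ g ∘ f.eval ∘ h = powMapNeg f.degree)

/-- The deck group `Deck(f^k)` of the `k`-th iterate of `f`, with the convention
`Deck(f^0) = {id}`. -/
def deckIter (f : RatMap) (k : ℕ) : Subgroup (Equiv.Perm RSphere) :=
  if k = 0 then ⊥ else deckGroup (f.eval^[k])

/-- `Deck*(f^k) = Deck(f^k) \ Deck(f^{k-1})`, with the convention `Deck*(f^0) = {id}`. -/
def deckStar (f : RatMap) (k : ℕ) : Set (Equiv.Perm RSphere) :=
  if k = 0 then {1}
  else (deckIter f k : Set (Equiv.Perm RSphere)) \ (deckIter f (k - 1) : Set (Equiv.Perm RSphere))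

/-- A bicritical rational map with critical values `v₁ ≠ v₂` is critically coalescing
if `f(v₁) = f(v₂)`. -/
def CriticallyCoalescing (f : RatMap) : Prop :=
  ∃ v₁ v₂ : RSphere, v₁ ≠ v₂ ∧ f.criticalValues = {v₁, v₂} ∧ f.eval v₁ = f.eval v₂

end RatMap

/-- A group is dihedral if it is isomorphic to `D_{2n}` for some `n ≥ 2` (the Klein
four-group `V₄ = D₄` counts as dihedral). -/
def IsDihedral (G : Type*) [Group G] : Prop :=
  ∃ n : ℕ, 2 ≤ n ∧ Nonempty (G ≃* DihedralGroup n)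


open RSphere

/-- The set of Möbius transformations preserving both the critical points and the
critical values of `f`. -/
def symSet (f : RatMap) : Set (RSphere → RSphere) :=
  {mu | IsMobius mu ∧ mu '' f.criticalPoints = f.criticalPoints ∧
    mu '' f.criticalValues = f.criticalValues}

namespace RSphere

lemma mApply_fix_coe {a b c d x : ℂ} (h : mApply a b c d (x : RSphere) = (x : RSphere)) :
    c * x ^ 2 + (d - a) * x - b = 0 := by
  rw [mApply_coe] at h
  split_ifs at h with h0
  · exact absurd h (OnePoint.infty_ne_coe x)
  · rw [OnePoint.coe_eq_coe] at h
    have h1 := (div_eq_iff h0).mp h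
    linear_combination -h1

lemma mApply_fix_infty {a b c d : ℂ} (h : mApply a b c d ∞ = ∞) : c = 0 := by
  rw [mApply_infty] at h
  by_contra hc
  rw [if_neg hc] at h
  exact OnePoint.coe_ne_infty _ h

lemma mApply_eq_id_of_three_fixed {a b c d : ℂ} (hdet : a * d - b * c ≠ 0)
    {z1 z2 z3 : RSphere} (h12 : z1 ≠ z2) (h13 : z1 ≠ z3) (h23 : z2 ≠ z3)
    (f1 : mApply a b c d z1 = z1) (f2 : mApply a b c d z2 = z2)
    (f3 : mApply a b c d z3 = z3) : mApply a b c d = id := by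
  suffices h : c = 0 ∧ d = a ∧ b = 0 by
    obtain ⟨hc, hd, hb⟩ := h
    have ha : a ≠ 0 := by intro h0; apply hdet; rw [hc, hd, hb, h0]; ring
    rw [hc, hd, hb]
    exact mApply_diag ha
  have two_fin : ∀ x1 x2 : ℂ, x1 ≠ x2 → c = 0 →
      c * x1 ^ 2 + (d - a) * x1 - b = 0 → c * x2 ^ 2 + (d - a) * x2 - b = 0 →
      c = 0 ∧ d = a ∧ b = 0 := by
    intro x1 x2 hx12 hc e1 e2
    have hda : d - a = 0 := by
      have h0 : (x1 - x2) * (d - a) = 0 := by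
        linear_combination e1 - e2 - (x1 ^ 2 - x2 ^ 2) * hc
      rcases mul_eq_zero.mp h0 with h' | h'
      · exact absurd (sub_eq_zero.mp h') hx12
      · exact h'
    refine ⟨hc, sub_eq_zero.mp hda, ?_⟩
    linear_combination -e1 + x1 ^ 2 * hc + x1 * hda
  cases z1 using OnePoint.rec with
  | infty =>
    have hc := mApply_fix_infty f1
    cases z2 using OnePoint.rec with
    | infty => exact absurd rfl h12
    | coe x2 =>
      cases z3 using OnePoint.rec with
      | infty => exact absurd rfl h13
      | coe x3 =>
        exact two_fin x2 x3 (fun h => h23 (by rw [h])) hc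
          (mApply_fix_coe f2) (mApply_fix_coe f3)
  | coe x1 =>
    have e1 := mApply_fix_coe f1
    cases z2 using OnePoint.rec with
    | infty =>
      have hc := mApply_fix_infty f2
      cases z3 using OnePoint.rec with
      | infty => exact absurd rfl h23
      | coe x3 =>
        exact two_fin x1 x3 (fun h => h13 (by rw [h])) hc e1 (mApply_fix_coe f3)
    | coe x2 =>
      have e2 := mApply_fix_coe f2
      have hx12 : x1 ≠ x2 := fun h => h12 (by rw [h])
      cases z3 using OnePoint.rec with
      | infty =>
        exact two_fin x1 x2 hx12 (mApply_fix_infty f3) e1 e2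
      | coe x3 =>
        have e3 := mApply_fix_coe f3
        have hx13 : x1 ≠ x3 := fun h => h13 (by rw [h])
        have hx23 : x2 ≠ x3 := fun h => h23 (by rw [h])
        have l12 : c * (x1 + x2) + (d - a) = 0 := by
          have h0 : (x1 - x2) * (c * (x1 + x2) + (d - a)) = 0 := by
            linear_combination e1 - e2
          rcases mul_eq_zero.mp h0 with h' | h'
          · exact absurd (sub_eq_zero.mp h') hx12
          · exact h'
        have l13 : c * (x1 + x3) + (d - a) = 0 := by
          have h0 : (x1 - x3) * (c * (x1 + x3) + (d - a)) = 0 := by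
            linear_combination e1 - e3
          rcases mul_eq_zero.mp h0 with h' | h'
          · exact absurd (sub_eq_zero.mp h') hx13
          · exact h'
        have hc : c = 0 := by
          have h0 : c * (x2 - x3) = 0 := by linear_combination l12 - l13
          rcases mul_eq_zero.mp h0 with h' | h'
          · exact h'
          · exact absurd (sub_eq_zero.mp h') hx23
        exact two_fin x1 x2 hx12 hc e1 e2

lemma mApply_comp_inv {a b c d : ℂ} (h : a * d - b * c ≠ 0) :
    mApply a b c d ∘ mApply d (-b) (-c) a = id := by
  have h' : d * a - -b * -c ≠ 0 := by
    rw [show d * a - -b * -c = a * d - b * c from by ring]; exact h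
  have := mApply_inv_comp h'
  simpa using this

lemma IsMobius.injective {g : RSphere → RSphere} (hg : IsMobius g) :
    Function.Injective g := by
  obtain ⟨a, b, c, d, hdet, rfl⟩ := hg
  have h := mApply_inv_comp hdet
  exact Function.LeftInverse.injective (g := mApply d (-b) (-c) a) (fun x => congrFun h x)

lemma mobius_eq_on_three {g h : RSphere → RSphere} (hg : IsMobius g) (hh : IsMobius h)
    {z1 z2 z3 : RSphere} (h12 : z1 ≠ z2) (h13 : z1 ≠ z3) (h23 : z2 ≠ z3)
    (e1 : g z1 = h z1) (e2 : g z2 = h z2) (e3 : g z3 = h z3) : g = h := by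
  obtain ⟨a, b, c, d, hdet, rfl⟩ := hh
  have hdet' : d * a - -b * -c ≠ 0 := by
    rw [show d * a - -b * -c = a * d - b * c from by ring]; exact hdet
  have hLI : mApply d (-b) (-c) a ∘ mApply a b c d = id := mApply_inv_comp hdet
  have hRI : mApply a b c d ∘ mApply d (-b) (-c) a = id := mApply_comp_inv hdet
  obtain ⟨a', b', c', d', hdet2, rfl⟩ := hg
  have hk : mApply d (-b) (-c) a ∘ mApply a' b' c' d' =
      mApply (d * a' + -b * c') (d * b' + -b * d') (-c * a' + a * c') (-c * b' + a * d') :=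
    mApply_comp d (-b) (-c) a a' b' c' d' hdet2
  have hkdet : (d * a' + -b * c') * (-c * b' + a * d')
      - (d * b' + -b * d') * (-c * a' + a * c') ≠ 0 := by
    rw [show (d * a' + -b * c') * (-c * b' + a * d')
      - (d * b' + -b * d') * (-c * a' + a * c')
      = (d * a - (-b) * (-c)) * (a' * d' - b' * c') from by ring]
    exact mul_ne_zero hdet' hdet2
  have fix : ∀ z : RSphere, mApply a' b' c' d' z = mApply a b c d z →
      mApply (d * a' + -b * c') (d * b' + -b * d') (-c * a' + a * c') (-c * b' + a * d') z = z := by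
    intro z hz
    have : (mApply d (-b) (-c) a ∘ mApply a' b' c' d') z = z := by
      simp only [Function.comp_apply, hz]
      exact congrFun hLI z
    rwa [hk] at this
  have hid := mApply_eq_id_of_three_fixed hkdet h12 h13 h23 (fix z1 e1) (fix z2 e2) (fix z3 e3)
  rw [← hk] at hid
  calc mApply a' b' c' d'
      = id ∘ mApply a' b' c' d' := by rw [Function.id_comp]
    _ = (mApply a b c d ∘ mApply d (-b) (-c) a) ∘ mApply a' b' c' d' := by rw [hRI]
    _ = mApply a b c d ∘ (mApply d (-b) (-c) a ∘ mApply a' b' c' d') := by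
        rw [Function.comp_assoc]
    _ = mApply a b c d := by rw [hid, Function.comp_id]

lemma pair_cases {μ : RSphere → RSphere} (hinj : Function.Injective μ) {x y : RSphere}
    (hxy : x ≠ y) (him : μ '' {x, y} = {x, y}) :
    (μ x = x ∧ μ y = y) ∨ (μ x = y ∧ μ y = x) := by
  have hx : μ x ∈ ({x, y} : Set RSphere) := by
    rw [← him]; exact Set.mem_image_of_mem μ (by simp)
  have hy : μ y ∈ ({x, y} : Set RSphere) := by
    rw [← him]; exact Set.mem_image_of_mem μ (by simp)
  simp only [Set.mem_insert_iff, Set.mem_singleton_iff] at hx hy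
  rcases hx with hx | hx <;> rcases hy with hy | hy
  · exact absurd (hinj (hx.trans hy.symm)) hxy
  · exact Or.inl ⟨hx, hy⟩
  · exact Or.inr ⟨hx, hy⟩
  · exact absurd (hinj (hx.trans hy.symm)) hxy

end RSphere

lemma encard4_ne {α : Type*} {a b c d : α} (h : ({a, b, c, d} : Set α).encard = 4) :
    a ≠ b ∧ a ≠ c ∧ a ≠ d ∧ b ≠ c ∧ b ≠ d ∧ c ≠ d := by
  have h3 : ∀ x y z : α, ({x, y, z} : Set α).encard ≤ 3 := by
    intro x y z
    calc ({x, y, z} : Set α).encard ≤ ({y, z} : Set α).encard + 1 := Set.encard_insert_le _ _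
      _ ≤ (({z} : Set α).encard + 1) + 1 := by
          gcongr
          exact Set.encard_insert_le _ _
      _ = 3 := by rw [Set.encard_singleton]; rfl
  have key : ∀ x y z : α, ({a, b, c, d} : Set α) = {x, y, z} → False := by
    intro x y z hxyz
    rw [hxyz] at h
    have h' := h3 x y z
    rw [h] at h'
    norm_num at h'
  refine ⟨?_, ?_, ?_, ?_, ?_, ?_⟩ <;> intro e
  · exact key b c d (by ext x; simp only [Set.mem_insert_iff, Set.mem_singleton_iff, e]; tauto)
  · exact key c b d (by ext x; simp only [Set.mem_insert_iff, Set.mem_singleton_iff, e]; tauto)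
  · exact key d b c (by ext x; simp only [Set.mem_insert_iff, Set.mem_singleton_iff, e]; tauto)
  · exact key a c d (by ext x; simp only [Set.mem_insert_iff, Set.mem_singleton_iff, e]; tauto)
  · exact key a d c (by ext x; simp only [Set.mem_insert_iff, Set.mem_singleton_iff, e]; tauto)
  · exact key a b d (by ext x; simp only [Set.mem_insert_iff, Set.mem_singleton_iff, e]; tauto)

/-- Let `f` be a bicritical rational map with `|C_f ∪ V_f| = 4`. Then there are at most
four Möbius transformations `μ` with `μ(C_f) = C_f` and `μ(V_f) = V_f`; any such `μ`
which is not the identity is an involution; these maps form a group under composition,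
and if all four exist, this group is isomorphic to the Klein four-group `V₄`. -/
theorem four_mobius_preserving_crits_and_values (f : RatMap) (hf : f.Bicritical)
    (h4 : (f.criticalPoints ∪ f.criticalValues).encard = 4) :
    (symSet f).encard ≤ 4 ∧
    (∀ mu ∈ symSet f, mu ≠ id → mu ∘ mu = id) ∧
    (id ∈ symSet f ∧
      (∀ mu ∈ symSet f, ∀ tau ∈ symSet f, mu ∘ tau ∈ symSet f) ∧
      (∀ mu ∈ symSet f, ∃ tau ∈ symSet f, mu ∘ tau = id ∧ tau ∘ mu = id)) ∧
    ((symSet f).encard = 4 → ∃ mu₁ mu₂ mu₃ : RSphere → RSphere,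
      symSet f = {id, mu₁, mu₂, mu₃} ∧
      mu₁ ≠ id ∧ mu₂ ≠ id ∧ mu₃ ≠ id ∧ mu₁ ≠ mu₂ ∧ mu₁ ≠ mu₃ ∧ mu₂ ≠ mu₃ ∧
      mu₁ ∘ mu₁ = id ∧ mu₂ ∘ mu₂ = id ∧ mu₃ ∘ mu₃ = id ∧
      mu₁ ∘ mu₂ = mu₃ ∧ mu₂ ∘ mu₁ = mu₃ ∧ mu₂ ∘ mu₃ = mu₁ ∧ mu₃ ∘ mu₂ = mu₁ ∧
      mu₃ ∘ mu₁ = mu₂ ∧ mu₁ ∘ mu₃ = mu₂) := by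
    classical
  obtain ⟨c1, c2, hc12, hC⟩ := Set.encard_eq_two.mp hf
  have hV : f.criticalValues = {f.eval c1, f.eval c2} := by
    rw [RatMap.criticalValues, hC, Set.image_pair]
  set v1 := f.eval c1 with hv1
  set v2 := f.eval c2 with hv2
  have hU : f.criticalPoints ∪ f.criticalValues = {c1, c2, v1, v2} := by
    rw [hC, hV]
    ext x
    simp only [Set.mem_union, Set.mem_insert_iff, Set.mem_singleton_iff]
    tauto
  rw [hU] at h4
  obtain ⟨_, h13, h14, h23, h24, h34⟩ := encard4_ne h4
  -- hc12 : c1 ≠ c2, h13 : c1 ≠ v1, h14 : c1 ≠ v2, h23 : c2 ≠ v1, h24 : c2 ≠ v2, h34 : v1 ≠ v2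
  have hmem : ∀ μ ∈ symSet f, IsMobius μ ∧ μ '' {c1, c2} = {c1, c2} ∧
      μ '' {v1, v2} = {v1, v2} := by
    intro μ hμ
    obtain ⟨h1, h2, h3⟩ := hμ
    rw [hC] at h2
    rw [hV] at h3
    exact ⟨h1, h2, h3⟩
  have val : ∀ μ ∈ symSet f,
      ((μ c1 = c1 ∧ μ c2 = c2) ∨ (μ c1 = c2 ∧ μ c2 = c1)) ∧
      ((μ v1 = v1 ∧ μ v2 = v2) ∨ (μ v1 = v2 ∧ μ v2 = v1)) := by
    intro μ hμ
    obtain ⟨hm, himC, himV⟩ := hmem μ hμ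
    exact ⟨pair_cases hm.injective hc12 himC, pair_cases hm.injective h34 himV⟩
  have key : ∀ μ ∈ symSet f, ∀ τ ∈ symSet f, μ c1 = τ c1 → μ v1 = τ v1 → μ = τ := by
    intro μ hμ τ hτ e1 e2
    have e1' : μ c2 = τ c2 := by
      rcases (val μ hμ).1 with ⟨a1, a2⟩ | ⟨a1, a2⟩ <;>
        rcases (val τ hτ).1 with ⟨b1, b2⟩ | ⟨b1, b2⟩
      · rw [a2, b2]
      · exact absurd ((a1.symm.trans e1).trans b1) hc12
      · exact absurd ((b1.symm.trans e1.symm).trans a1) hc12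
      · rw [a2, b2]
    exact mobius_eq_on_three (hmem μ hμ).1 (hmem τ hτ).1 hc12 h13 h23 e1 e1' e2
  have hid : id ∈ symSet f := ⟨IsMobius.id', by simp, by simp⟩
  have hmul : ∀ μ ∈ symSet f, ∀ τ ∈ symSet f, μ ∘ τ ∈ symSet f := by
    intro μ hμ τ hτ
    exact ⟨hμ.1.comp hτ.1,
      by rw [Set.image_comp, hτ.2.1, hμ.2.1],
      by rw [Set.image_comp, hτ.2.2, hμ.2.2]⟩
  have tblC : ∀ μ ∈ symSet f, μ c1 = c2 → μ c2 = c1 := by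
    intro μ hμ h
    rcases (val μ hμ).1 with ⟨a1, a2⟩ | ⟨a1, a2⟩
    · exact absurd (a1.symm.trans h) hc12
    · exact a2
  have tblC' : ∀ μ ∈ symSet f, μ c1 = c1 → μ c2 = c2 := by
    intro μ hμ h
    rcases (val μ hμ).1 with ⟨a1, a2⟩ | ⟨a1, a2⟩
    · exact a2
    · exact absurd (a1.symm.trans h).symm hc12
  have tblV : ∀ μ ∈ symSet f, μ v1 = v2 → μ v2 = v1 := by
    intro μ hμ h
    rcases (val μ hμ).2 with ⟨a1, a2⟩ | ⟨a1, a2⟩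
    · exact absurd (a1.symm.trans h) h34
    · exact a2
  have tblV' : ∀ μ ∈ symSet f, μ v1 = v1 → μ v2 = v2 := by
    intro μ hμ h
    rcases (val μ hμ).2 with ⟨a1, a2⟩ | ⟨a1, a2⟩
    · exact a2
    · exact absurd (a1.symm.trans h).symm h34
  have hinvol : ∀ μ ∈ symSet f, μ ∘ μ = id := by
    intro μ hμ
    apply key _ (hmul μ hμ μ hμ) _ hid
    · show μ (μ c1) = c1
      rcases (val μ hμ).1 with ⟨a1, a2⟩ | ⟨a1, a2⟩
      · rw [a1, a1]
      · rw [a1, a2]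
    · show μ (μ v1) = v1
      rcases (val μ hμ).2 with ⟨a1, a2⟩ | ⟨a1, a2⟩
      · rw [a1, a1]
      · rw [a1, a2]
  set b : (RSphere → RSphere) → Bool × Bool :=
    fun μ => (decide (μ c1 = c2), decide (μ v1 = v2)) with hb
  have hbc : ∀ μ ∈ symSet f, ∀ τ ∈ symSet f, (b μ).1 = (b τ).1 → μ c1 = τ c1 := by
    intro μ hμ τ hτ he
    have he' : (μ c1 = c2) ↔ (τ c1 = c2) := by
      rw [hb] at he
      simpa using he
    rcases (val μ hμ).1 with ⟨a1, _⟩ | ⟨a1, _⟩ <;> rcases (val τ hτ).1 with ⟨b1, _⟩ | ⟨b1, _⟩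
    · rw [a1, b1]
    · exact absurd (a1.symm.trans (he'.mpr b1)) hc12
    · exact absurd (b1.symm.trans (he'.mp a1)) hc12
    · rw [a1, b1]
  have hbv : ∀ μ ∈ symSet f, ∀ τ ∈ symSet f, (b μ).2 = (b τ).2 → μ v1 = τ v1 := by
    intro μ hμ τ hτ he
    have he' : (μ v1 = v2) ↔ (τ v1 = v2) := by
      rw [hb] at he
      simpa using he
    rcases (val μ hμ).2 with ⟨a1, _⟩ | ⟨a1, _⟩ <;> rcases (val τ hτ).2 with ⟨b1, _⟩ | ⟨b1, _⟩
    · rw [a1, b1]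
    · exact absurd (a1.symm.trans (he'.mpr b1)) h34
    · exact absurd (b1.symm.trans (he'.mp a1)) h34
    · rw [a1, b1]
  have hb_inj : Set.InjOn b (symSet f) := by
    intro μ hμ τ hτ he
    exact key μ hμ τ hτ (hbc μ hμ τ hτ (by rw [he])) (hbv μ hμ τ hτ (by rw [he]))
  have hcard : (symSet f).encard ≤ 4 := by
    rw [← hb_inj.encard_image]
    calc (b '' symSet f).encard ≤ (Set.univ : Set (Bool × Bool)).encard :=
          Set.encard_mono (Set.subset_univ _)
      _ = 4 := by
          rw [Set.encard_univ]
          simp only [ENat.card_eq_coe_fintype_card, Fintype.card_prod, Fintype.card_bool,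
            Nat.reduceMul, Nat.cast_ofNat]
  refine ⟨hcard, fun μ hμ _ => hinvol μ hμ,
    ⟨hid, hmul, fun μ hμ => ⟨μ, hμ, hinvol μ hμ, hinvol μ hμ⟩⟩, ?_⟩
  intro h4'
  have hsurj : ∀ p : Bool × Bool, ∃ μ ∈ symSet f, b μ = p := by
    intro p
    by_contra hne
    push_neg at hne
    have hsub : b '' symSet f ⊆ Set.univ \ {p} := by
      rintro q ⟨μ, hμ, rfl⟩
      exact ⟨trivial, fun he => (hne μ hμ) he⟩
    have h3 : (b '' symSet f).encard ≤ 3 := by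
      refine le_trans (Set.encard_mono hsub) ?_
      rw [Set.encard_diff_singleton_of_mem (Set.mem_univ p), Set.encard_univ]
      simp only [ENat.card_eq_coe_fintype_card, Fintype.card_prod, Fintype.card_bool,
        Nat.reduceMul, Nat.cast_ofNat]
      norm_num
    rw [hb_inj.encard_image, h4'] at h3
    norm_num at h3
  obtain ⟨μ1, hμ1, hb1⟩ := hsurj (true, false)
  obtain ⟨μ2, hμ2, hb2⟩ := hsurj (false, true)
  obtain ⟨μ3, hμ3, hb3⟩ := hsurj (true, true)
  have decC : ∀ μ ∈ symSet f, ∀ p : Bool × Bool, b μ = p →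
      (p.1 = true → μ c1 = c2) ∧ (p.1 = false → μ c1 = c1) := by
    intro μ hμ p hp
    constructor
    · intro h
      have : decide (μ c1 = c2) = true := by rw [hb] at hp; rw [← h, ← hp]
      exact of_decide_eq_true this
    · intro h
      have hd : decide (μ c1 = c2) = false := by rw [hb] at hp; rw [← h, ← hp]
      have hne := of_decide_eq_false hd
      rcases (val μ hμ).1 with ⟨a1, _⟩ | ⟨a1, _⟩
      · exact a1
      · exact absurd a1 hne
  have decV : ∀ μ ∈ symSet f, ∀ p : Bool × Bool, b μ = p →
      (p.2 = true → μ v1 = v2) ∧ (p.2 = false → μ v1 = v1) := by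
    intro μ hμ p hp
    constructor
    · intro h
      have : decide (μ v1 = v2) = true := by rw [hb] at hp; rw [← h, ← hp]
      exact of_decide_eq_true this
    · intro h
      have hd : decide (μ v1 = v2) = false := by rw [hb] at hp; rw [← h, ← hp]
      have hne := of_decide_eq_false hd
      rcases (val μ hμ).2 with ⟨a1, _⟩ | ⟨a1, _⟩
      · exact a1
      · exact absurd a1 hne
  have m1c : μ1 c1 = c2 := (decC μ1 hμ1 _ hb1).1 rfl
  have m1v : μ1 v1 = v1 := (decV μ1 hμ1 _ hb1).2 rfl
  have m2c : μ2 c1 = c1 := (decC μ2 hμ2 _ hb2).2 rfl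
  have m2v : μ2 v1 = v2 := (decV μ2 hμ2 _ hb2).1 rfl
  have m3c : μ3 c1 = c2 := (decC μ3 hμ3 _ hb3).1 rfl
  have m3v : μ3 v1 = v2 := (decV μ3 hμ3 _ hb3).1 rfl
  have m1c2 : μ1 c2 = c1 := tblC μ1 hμ1 m1c
  have m1v2 : μ1 v2 = v2 := tblV' μ1 hμ1 m1v
  have m2c2 : μ2 c2 = c2 := tblC' μ2 hμ2 m2c
  have m2v2 : μ2 v2 = v1 := tblV μ2 hμ2 m2v
  have m3c2 : μ3 c2 = c1 := tblC μ3 hμ3 m3c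
  have m3v2 : μ3 v2 = v1 := tblV μ3 hμ3 m3v
  refine ⟨μ1, μ2, μ3, ?_, ?_, ?_, ?_, ?_, ?_, ?_,
    hinvol μ1 hμ1, hinvol μ2 hμ2, hinvol μ3 hμ3, ?_, ?_, ?_, ?_, ?_, ?_⟩
  · apply Set.Subset.antisymm
    · intro μ hμ
      simp only [Set.mem_insert_iff, Set.mem_singleton_iff]
      rcases (val μ hμ).1 with ⟨a1, _⟩ | ⟨a1, _⟩ <;> rcases (val μ hμ).2 with ⟨b1, _⟩ | ⟨b1, _⟩
      · exact Or.inl (key μ hμ id hid a1 b1)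
      · exact Or.inr (Or.inr (Or.inl (key μ hμ μ2 hμ2 (a1.trans m2c.symm) (b1.trans m2v.symm))))
      · exact Or.inr (Or.inl (key μ hμ μ1 hμ1 (a1.trans m1c.symm) (b1.trans m1v.symm)))
      · exact Or.inr (Or.inr (Or.inr (key μ hμ μ3 hμ3 (a1.trans m3c.symm) (b1.trans m3v.symm))))
    · rintro μ (rfl | rfl | rfl | rfl)
      · exact hid
      · exact hμ1
      · exact hμ2
      · exact hμ3
  · intro h
    rw [h] at m1c
    exact hc12 m1c
  · intro h
    rw [h] at m2v
    exact h34 m2v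
  · intro h
    rw [h] at m3c
    exact hc12 m3c
  · intro h
    rw [h] at m1c
    exact hc12 (m2c.symm.trans m1c)
  · intro h
    rw [h] at m1v
    exact h34 (m1v.symm.trans m3v)
  · intro h
    rw [h] at m2c
    exact hc12 (m2c.symm.trans m3c)
  · exact key _ (hmul μ1 hμ1 μ2 hμ2) _ hμ3
      (show μ1 (μ2 c1) = μ3 c1 by rw [m2c, m1c, m3c])
      (show μ1 (μ2 v1) = μ3 v1 by rw [m2v, m1v2, m3v])
  · exact key _ (hmul μ2 hμ2 μ1 hμ1) _ hμ3
      (show μ2 (μ1 c1) = μ3 c1 by rw [m1c, m2c2, m3c])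
      (show μ2 (μ1 v1) = μ3 v1 by rw [m1v, m2v, m3v])
  · exact key _ (hmul μ2 hμ2 μ3 hμ3) _ hμ1
      (show μ2 (μ3 c1) = μ1 c1 by rw [m3c, m2c2, m1c])
      (show μ2 (μ3 v1) = μ1 v1 by rw [m3v, m2v2, m1v])
  · exact key _ (hmul μ3 hμ3 μ2 hμ2) _ hμ1
      (show μ3 (μ2 c1) = μ1 c1 by rw [m2c, m3c, m1c])
      (show μ3 (μ2 v1) = μ1 v1 by rw [m2v, m3v2, m1v])
  · exact key _ (hmul μ3 hμ3 μ1 hμ1) _ hμ2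
      (show μ3 (μ1 c1) = μ2 c1 by rw [m1c, m3c2, m2c])
      (show μ3 (μ1 v1) = μ2 v1 by rw [m1v, m3v, m2v])
  · exact key _ (hmul μ1 hμ1 μ3 hμ3) _ hμ2
      (show μ1 (μ3 c1) = μ2 c1 by rw [m3c, m1c2, m2c])
      (show μ1 (μ3 v1) = μ2 v1 by rw [m3v, m1v2, m2v])
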